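/- arXiv:1311.3473 — 3 statements merged into one kernel-verified Lean document; each statement's English description precedes it below -/
import Mathlib

section
/- Let μ be a positive measure on ℂ with support contained in the closed unit disk, and let M(μ) = (c_{i,j})_{i,j∈ℕ} with c_{i,j} = ∫ z^i conj(z)^j dμ be its moment matrix. Then the following are equivalent: (1) μ(𝕋) = 0, i.e. the restriction of μ to the unit circle is zero; (2) M(μ) is weakly asymptotic Toeplitz with all diagonal limits zero, i.e. for every k ∈ ℤ, lim_{n→∞} c_{n,n+k} = 0; (3) lim_{n→∞} c_{n,n} = 0. -/
open MeasureTheory Filter Matrix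
open scoped ComplexOrder Topology

noncomputable section

/-- The `(n+1) × (n+1)` leading principal truncation of an infinite matrix. -/
def trunc (M : ℕ → ℕ → ℂ) (n : ℕ) : Matrix (Fin (n + 1)) (Fin (n + 1)) ℂ :=
  Matrix.of fun i j => M i j

/-- An infinite matrix is Hermitian positive definite (HPD) if every leading principal
truncation is positive definite (equivalently, it is Hermitian and all leading
principal minors are positive). -/
def IsHPD (M : ℕ → ℕ → ℂ) : Prop := ∀ n, (trunc M n).PosDef

/-- The smallest eigenvalue of the truncation `M_n`, as the minimum of the Rayleigh
quotient `v M_n v^* / (v v^*)` over nonzero `v ∈ ℂ^{n+1}`. -/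
def smallestEig (M : ℕ → ℕ → ℂ) (n : ℕ) : ℝ :=
  ⨅ v : {v : Fin (n + 1) → ℂ // v ≠ 0},
    (∑ i : Fin (n + 1), ∑ j : Fin (n + 1), v.1 i * M i j * (starRingEnd ℂ) (v.1 j)).re / ∑ i, Complex.normSq (v.1 i)

/-- `B` is the transition matrix of `M`: upper triangular, positive diagonal,
with `B_nᵗ M_n conj(B_n) = I` for all `n`. -/
def IsTransition (M B : ℕ → ℕ → ℂ) : Prop :=
  (∀ k n, n < k → B k n = 0) ∧
  (∀ n, 0 < (B n n).re ∧ (B n n).im = 0) ∧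
  (∀ n, (trunc B n)ᵀ * trunc M n * (trunc B n).map (starRingEnd ℂ) = 1)

/-- Operator norm of a finite matrix acting on the Euclidean space `ℂ^n`. -/
def opNorm {n : ℕ} (A : Matrix (Fin n) (Fin n) ℂ) : ℝ :=
  ‖LinearMap.toContinuousLinearMap (Matrix.toEuclideanLin A)‖


/-- The moment matrix of a measure on `ℂ`. -/
def momMat (μ : Measure ℂ) : ℕ → ℕ → ℂ :=
  fun i j => ∫ z, z ^ i * (starRingEnd ℂ) z ^ j ∂μ

/-!
Every entry satisfies `|c_{i,j}| ≤ ∫ |z|^(i+j) dμ`, and `c_{n,n} = ∫ |z|^(2n) dμ`. Since `μ` lives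
on the closed unit disk, `|z|^m` decreases to the indicator of `𝕋`, so by dominated convergence
`∫ |z|^m dμ → μ(𝕋)`. Hence `μ(𝕋) = 0` forces every diagonal of `M(μ)` to tend to zero, and
conversely `c_{n,n} → 0` identifies `μ(𝕋)` as the limit `0`.
-/

theorem tendsto_integral_norm_pow_measureReal_sphere {E : Type*} [NormedAddCommGroup E]
    [MeasurableSpace E] [OpensMeasurableSpace E] {μ : Measure E} [IsFiniteMeasure μ]
    (hμ : ∀ᵐ x ∂μ, ‖x‖ ≤ 1) :
    Tendsto (fun m : ℕ => ∫ x, ‖x‖ ^ m ∂μ) atTop (𝓝 (μ.real (Metric.sphere 0 1))) := by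
  rw [← mul_one (μ.real _), ← smul_eq_mul,
    ← integral_indicator_const _ Metric.isClosed_sphere.measurableSet]
  refine tendsto_integral_of_dominated_convergence (fun _ => (1 : ℝ))
    (fun m => (continuous_norm.pow m).aestronglyMeasurable) (integrable_const 1)
    (fun m => ?_) ?_
  · filter_upwards [hμ] with x hx
    rw [Real.norm_of_nonneg (by positivity)]
    exact pow_le_one₀ (norm_nonneg x) hx
  · filter_upwards [hμ] with x hx
    rcases hx.eq_or_lt with hx | hx
    · simp [hx]
    · rw [Set.indicator_of_notMem (by simpa using hx.ne)]
      exact tendsto_pow_atTop_nhds_zero_of_lt_one (norm_nonneg x) hx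

theorem norm_momMat_le (μ : Measure ℂ) (i j : ℕ) :
    ‖momMat μ i j‖ ≤ ∫ z, ‖z‖ ^ (i + j) ∂μ :=
  (norm_integral_le_integral_norm _).trans_eq <| by simp [pow_add]

theorem momMat_self (μ : Measure ℂ) (n : ℕ) :
    momMat μ n n = ((∫ z, ‖z‖ ^ (2 * n) ∂μ : ℝ) : ℂ) := by
  rw [← integral_complex_ofReal]
  refine integral_congr_ae (Eventually.of_forall fun z => ?_)
  simp only [← mul_pow, Complex.mul_conj, Complex.normSq_eq_norm_sq, pow_mul]
  push_cast
  rfl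

theorem tendsto_momMat_of_tendsto_integral_norm_pow {μ : Measure ℂ}
    (hμ : Tendsto (fun m : ℕ => ∫ z, ‖z‖ ^ m ∂μ) atTop (𝓝 0)) {i j : ℕ → ℕ}
    (hi : Tendsto i atTop atTop) :
    Tendsto (fun n => momMat μ (i n) (j n)) atTop (𝓝 0) := by
  refine squeeze_zero_norm (fun n => norm_momMat_le μ _ _) (hμ.comp ?_)
  exact tendsto_atTop_mono (fun n => Nat.le_add_right _ _) hi

/-- for a measure `μ` supported in the closed unit disk with moment
matrix `(c_{i,j})`, the following are equivalent: (1) `μ(𝕋) = 0`; (2) for every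
`k ∈ ℤ`, `lim_n c_{n,n+k} = 0`; (3) `lim_n c_{n,n} = 0`. -/
theorem stmt17 (μ : Measure ℂ) [IsFiniteMeasure μ]
    (hsupp : μ ((Metric.closedBall (0 : ℂ) 1)ᶜ) = 0) :
    (μ (Metric.sphere (0 : ℂ) 1) = 0 ↔
      ∀ k : ℤ, Tendsto (fun n : ℕ => momMat μ n ((n : ℤ) + k).toNat) atTop (𝓝 0)) ∧
    ((∀ k : ℤ, Tendsto (fun n : ℕ => momMat μ n ((n : ℤ) + k).toNat) atTop (𝓝 0)) ↔
      Tendsto (fun n : ℕ => momMat μ n n) atTop (𝓝 0)) := by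
  have hdisk : ∀ᵐ z ∂μ, ‖z‖ ≤ 1 := by
    filter_upwards [measure_eq_zero_iff_ae_notMem.1 hsupp] with z hz
    simpa using hz
  have hlim := tendsto_integral_norm_pow_measureReal_sphere hdisk
  have h12 : μ (Metric.sphere 0 1) = 0 →
      ∀ k : ℤ, Tendsto (fun n : ℕ => momMat μ n ((n : ℤ) + k).toNat) atTop (𝓝 0) :=
    fun h _ => tendsto_momMat_of_tendsto_integral_norm_pow
      (by simpa [measureReal_def, h] using hlim) tendsto_id
  have h23 : (∀ k : ℤ, Tendsto (fun n : ℕ => momMat μ n ((n : ℤ) + k).toNat) atTop (𝓝 0)) →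
      Tendsto (fun n : ℕ => momMat μ n n) atTop (𝓝 0) :=
    fun h => by simpa using h 0
  have h31 (h : Tendsto (fun n : ℕ => momMat μ n n) atTop (𝓝 0)) :
      μ (Metric.sphere 0 1) = 0 := by
    simp only [momMat_self] at h
    have hdiag := (Complex.continuous_ofReal.tendsto _).comp
      (hlim.comp (tendsto_id.const_mul_atTop' two_pos))
    rw [← measureReal_eq_zero_iff, ← Complex.ofReal_eq_zero]
    exact tendsto_nhds_unique hdiag h
  exact ⟨⟨h12, fun h => h31 (h23 h)⟩, ⟨h23, fun h => h12 (h31 h)⟩⟩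
end
end

section
/- Let μ be a positive measure on ℂ with support contained in the closed unit disk, let M(μ) = (c_{i,j}) with c_{i,j} = ∫ z^i conj(z)^j dμ be its moment matrix, and let ν be the restriction of μ to the unit circle 𝕋. Then M(μ) is a weakly asymptotic Toeplitz matrix and Lim(M(μ)) = T(ν); explicitly, for every k ∈ ℤ, lim_{n→∞} c_{n,n+k} = ∫_𝕋 conj(z)^k dν(z). -/
open MeasureTheory Filter Matrix
open scoped ComplexOrder Topology

noncomputable section

/-!
Dominated convergence, with the constant `1` as dominating function. For `|z| < 1` the
integrand `z ^ n * conj z ^ (n + k)` tends to `0`; for `|z| = 1` we have `conj z = z⁻¹`, so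
it equals `conj z ^ k` as soon as `n + k ≥ 0`. The pointwise limit is therefore the
indicator of the unit circle times `conj z ^ k`.
-/

section Pointwise

variable {𝕜 : Type*} [RCLike 𝕜]

open RCLike ComplexConjugate

lemma norm_pow_mul_conj_pow_le_one {z : 𝕜} (hz : ‖z‖ ≤ 1) (m n : ℕ) :
    ‖z ^ m * conj z ^ n‖ ≤ 1 := by
  rw [norm_mul, norm_pow, norm_pow, norm_conj]
  exact mul_le_one₀ (pow_le_one₀ (norm_nonneg z) hz) (by positivity)
    (pow_le_one₀ (norm_nonneg z) hz)

lemma tendsto_pow_mul_conj_pow_of_norm_lt_one {z : 𝕜} (hz : ‖z‖ < 1) (m : ℕ → ℕ) :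
    Tendsto (fun n : ℕ => z ^ n * conj z ^ m n) atTop (𝓝 0) := by
  rw [tendsto_zero_iff_norm_tendsto_zero]
  refine squeeze_zero (fun n => norm_nonneg _) (fun n => ?_)
    (tendsto_pow_atTop_nhds_zero_of_lt_one (norm_nonneg z) hz)
  rw [norm_mul, norm_pow, norm_pow, norm_conj]
  exact mul_le_of_le_one_right (by positivity) (pow_le_one₀ (norm_nonneg z) hz.le)

lemma pow_mul_conj_pow_toNat_of_norm_eq_one {z : 𝕜} (hz : ‖z‖ = 1) {n : ℕ} {k : ℤ}
    (hnk : 0 ≤ (n : ℤ) + k) : z ^ n * conj z ^ ((n : ℤ) + k).toNat = conj z ^ k := by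
  have hz0 : z ≠ 0 := norm_ne_zero_iff.mp (hz ▸ one_ne_zero)
  rw [← zpow_natCast (conj z), Int.toNat_of_nonneg hnk, ← inv_eq_conj hz,
    zpow_add₀ (inv_ne_zero hz0), zpow_natCast, ← mul_assoc, inv_pow, mul_inv_cancel₀
    (pow_ne_zero n hz0), one_mul]

lemma tendsto_pow_mul_conj_pow_toNat_of_norm_eq_one {z : 𝕜} (hz : ‖z‖ = 1) (k : ℤ) :
    Tendsto (fun n : ℕ => z ^ n * conj z ^ ((n : ℤ) + k).toNat) atTop (𝓝 (conj z ^ k)) := by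
  refine tendsto_const_nhds.congr' ?_
  filter_upwards [eventually_ge_atTop (-k).toNat] with n hn
  exact (pow_mul_conj_pow_toNat_of_norm_eq_one hz (by omega)).symm

lemma tendsto_pow_mul_conj_pow_toNat {z : 𝕜} (hz : ‖z‖ ≤ 1) (k : ℤ) :
    Tendsto (fun n : ℕ => z ^ n * conj z ^ ((n : ℤ) + k).toNat) atTop
      (𝓝 ((Metric.sphere (0 : 𝕜) 1).indicator (fun w => conj w ^ k) z)) := by
  rcases hz.eq_or_lt with hz | hz
  · rw [Set.indicator_of_mem (by simpa using hz)]
    exact tendsto_pow_mul_conj_pow_toNat_of_norm_eq_one hz k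
  · rw [Set.indicator_of_notMem (by simpa using hz.ne)]
    exact tendsto_pow_mul_conj_pow_of_norm_lt_one hz _

end Pointwise

lemma ae_dist_le_of_measure_compl_closedBall {X : Type*} [PseudoMetricSpace X]
    [MeasurableSpace X] {μ : Measure X} {x : X} {r : ℝ}
    (h : μ (Metric.closedBall x r)ᶜ = 0) : ∀ᵐ z ∂μ, dist z x ≤ r :=
  measure_eq_zero_iff_ae_notMem.mp h |>.mono fun _ hz => by simpa using hz

/-- for a measure `μ` supported in the closed unit disk with moment
matrix `(c_{i,j})` and `ν = μ|_𝕋`, the matrix `M(μ)` is weakly asymptotic Toeplitz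
with `Lim(M(μ)) = T(ν)`: for every `k ∈ ℤ`,
`lim_n c_{n,n+k} = ∫_𝕋 conj(z)^k dν`. -/
theorem stmt18 (μ : Measure ℂ) [IsFiniteMeasure μ]
    (hsupp : μ ((Metric.closedBall (0 : ℂ) 1)ᶜ) = 0) :
    ∀ k : ℤ, Tendsto (fun n : ℕ => momMat μ n ((n : ℤ) + k).toNat) atTop
      (𝓝 (∫ z, (starRingEnd ℂ) z ^ k ∂(μ.restrict (Metric.sphere (0 : ℂ) 1)))) := by
  intro k
  have hdisk : ∀ᵐ z ∂μ, ‖z‖ ≤ 1 := by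
    simpa using ae_dist_le_of_measure_compl_closedBall hsupp
  rw [← integral_indicator Metric.isClosed_sphere.measurableSet]
  refine tendsto_integral_of_dominated_convergence (fun _ => 1) (fun n => ?_)
    (integrable_const 1) (fun n => ?_) ?_
  · exact ((continuous_pow n).mul (Complex.continuous_conj.pow _)).aestronglyMeasurable
  · filter_upwards [hdisk] with z hz using norm_pow_mul_conj_pow_le_one hz _ _
  · filter_upwards [hdisk] with z hz using tendsto_pow_mul_conj_pow_toNat hz k
end
end

section
/- Let μ be a positive measure on ℂ with all moments finite whose moment matrix M(μ) = (∫ z^i conj(z)^j dμ)_{i,j∈ℕ} defines a compact operator on ℓ² (i.e. the map x ↦ M(μ)x is well defined on ℓ² and is a compact linear operator). Then μ(𝕋) = 0, i.e. the restriction of μ to the unit circle is the zero measure. -/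
open MeasureTheory Filter Matrix
open scoped ComplexOrder Topology

noncomputable section

/-! The diagonal entries `c_{n,n} = ∫ |z|^{2n} dμ` of the moment matrix all dominate
`μ {|z| ≥ 1}` (Markov). On the other hand the diagonal entries `(K e_n)_n` of a compact operator
`K` on `ℓ²` tend to `0`: along a subsequence `K e_n` converges in norm to some `y ∈ ℓ²`, and
`y_n → 0`. Hence `μ {|z| ≥ 1} = 0`, and in particular `μ(𝕋) = 0`. -/

open scoped ENNReal

theorem lp.tendsto_atTop_zero {E : Type*} [NormedAddCommGroup E] {p : ℝ≥0∞}
    (hp : p ≠ ∞) (y : lp (fun _ : ℕ => E) p) : Tendsto (fun i => y i) atTop (𝓝 0) := by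
  rcases eq_or_ne p 0 with rfl | hp0
  · rw [← Nat.cofinite_eq_atTop]
    exact tendsto_nhds_of_eventually_eq <|
      (memℓp_zero_iff.1 (lp.memℓp y)).eventually_cofinite_notMem.mono fun i => not_not.1
  have hpos : 0 < p.toReal := ENNReal.toReal_pos hp0 hp
  have h := ((lp.memℓp y).summable hpos).tendsto_atTop_zero.rpow_const (p := p.toReal⁻¹)
    (Or.inr (by positivity))
  rw [Real.zero_rpow (inv_ne_zero hpos.ne')] at h
  refine tendsto_zero_iff_norm_tendsto_zero.2 (h.congr fun i => ?_)
  rw [← Real.rpow_mul (norm_nonneg _), mul_inv_cancel₀ hpos.ne', Real.rpow_one]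

theorem IsCompactOperator.tendsto_apply_single_self {𝕜 E F : Type*} [NontriviallyNormedField 𝕜]
    [NormedAddCommGroup E] [NormedSpace 𝕜 E] [NormedAddCommGroup F] [NormedSpace 𝕜 F]
    {p q : ℝ≥0∞} [Fact (1 ≤ p)] [Fact (1 ≤ q)] (hq : q ≠ ∞)
    {K : lp (fun _ : ℕ => E) p →L[𝕜] lp (fun _ : ℕ => F) q} (hK : IsCompactOperator K) (x : E) :
    Tendsto (fun n => K (lp.single p n x) n) atTop (𝓝 0) := by
  set e : ℕ → lp (fun _ : ℕ => E) p := fun n => lp.single p n x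
  have he : Bornology.IsBounded (Set.range e) := by
    refine isBounded_iff_forall_norm_le.2 ⟨‖x‖, ?_⟩
    rintro - ⟨n, rfl⟩
    exact (lp.norm_single (E := fun _ : ℕ => E) (one_pos.trans_le Fact.out) n x).le
  obtain ⟨C, hC, hKC⟩ := hK.image_subset_compact_of_bounded he
  refine tendsto_of_subseq_tendsto fun ns hns => ?_
  obtain ⟨y, -, φ, hφ, hy⟩ := hC.tendsto_subseq fun n => hKC ⟨e (ns n), Set.mem_range_self _, rfl⟩
  have hy_apply : Tendsto (fun n => ‖y (ns (φ n))‖) atTop (𝓝 0) := by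
    simpa using ((lp.tendsto_atTop_zero hq y).comp (hns.comp hφ.tendsto_atTop)).norm
  refine ⟨φ, squeeze_zero_norm (fun n => ?_)
    (by simpa using (tendsto_iff_norm_sub_tendsto_zero.1 hy).add hy_apply)⟩
  calc ‖K (e (ns (φ n))) (ns (φ n))‖
      = ‖(K (e (ns (φ n))) - y) (ns (φ n)) + y (ns (φ n))‖ := by simp
    _ ≤ ‖K (e (ns (φ n))) - y‖ + ‖y (ns (φ n))‖ :=
      add_le_add_left (lp.norm_apply_le_norm (one_pos.trans_le Fact.out).ne' _ _) _
        |>.trans' (norm_add_le _ _)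

theorem eq_of_hasSum_mul_lp_single_one {𝕜 : Type*} [NormedRing 𝕜]
    {p : ℝ≥0∞} {a : ℕ → 𝕜} {n : ℕ} {s : 𝕜}
    (h : HasSum (fun j => a j * lp.single (E := fun _ : ℕ => 𝕜) p n 1 j) s) : s = a n := by
  refine h.unique ?_
  convert hasSum_ite_eq n (a n) using 2 with j
  split_ifs with hj <;> simp [lp.single_apply, hj]

theorem measure_one_le_norm_le_lintegral_enorm_pow {E : Type*} [NormedAddCommGroup E]
    [MeasurableSpace E] [OpensMeasurableSpace E] (μ : Measure E) (k : ℕ) :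
    μ {z | 1 ≤ ‖z‖} ≤ ∫⁻ z, ‖z‖ₑ ^ k ∂μ := by
  calc μ {z | 1 ≤ ‖z‖} ≤ μ {z | 1 ≤ ‖z‖ₑ ^ k} := measure_mono fun z hz => by
        simpa using one_le_pow₀ (ofReal_norm z ▸ ENNReal.one_le_ofReal.2 hz)
    _ = 1 * μ {z | 1 ≤ ‖z‖ₑ ^ k} := (one_mul _).symm
    _ ≤ ∫⁻ z, ‖z‖ₑ ^ k ∂μ := mul_meas_ge_le_lintegral₀ (by fun_prop) 1

theorem enorm_momMat_self {μ : Measure ℂ} {n : ℕ} (h : Integrable (fun z => ‖z‖ ^ (2 * n)) μ) :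
    ‖momMat μ n n‖ₑ = ∫⁻ z, ‖z‖ₑ ^ (2 * n) ∂μ := by
  have hdiag : momMat μ n n = ((∫ z, ‖z‖ ^ (2 * n) ∂μ : ℝ) : ℂ) := by
    rw [momMat, ← integral_complex_ofReal]
    congr 1 with z
    rw [← mul_pow, Complex.mul_conj, Complex.normSq_eq_norm_sq, pow_mul]
    push_cast; rfl
  rw [hdiag, ← ofReal_norm, Complex.norm_real, Real.norm_of_nonneg (by positivity),
    ofReal_integral_eq_lintegral_ofReal h (ae_of_all _ fun z => by positivity)]
  simp [ENNReal.ofReal_pow, ofReal_norm]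

/-- if the moment matrix of a measure `μ` on `ℂ` (with all moments
finite) defines a compact operator on `ℓ²`, then `μ(𝕋) = 0`. -/
theorem stmt19 (μ : Measure ℂ)
    (hmom : ∀ n : ℕ, Integrable (fun z => ‖z‖ ^ n) μ)
    (hcompact : ∃ K : lp (fun _ : ℕ => ℂ) 2 →L[ℂ] lp (fun _ : ℕ => ℂ) 2,
      IsCompactOperator (K : lp (fun _ : ℕ => ℂ) 2 → lp (fun _ : ℕ => ℂ) 2) ∧
      ∀ (x : lp (fun _ : ℕ => ℂ) 2) (i : ℕ),
        HasSum (fun j => momMat μ i j * x j) (K x i)) :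
    μ (Metric.sphere (0 : ℂ) 1) = 0 := by
  obtain ⟨K, hK, hKsum⟩ := hcompact
  have hdiag (n : ℕ) : K (lp.single 2 n 1) n = momMat μ n n :=
    eq_of_hasSum_mul_lp_single_one (hKsum _ n)
  have hmoment_tendsto : Tendsto (fun n => ∫⁻ z, ‖z‖ₑ ^ (2 * n) ∂μ) atTop (𝓝 0) := by
    simpa [hdiag, enorm_momMat_self (hmom _)] using
      (hK.tendsto_apply_single_self ENNReal.ofNat_ne_top (1 : ℂ)).enorm
  have hout : μ {z | 1 ≤ ‖z‖} = 0 := nonpos_iff_eq_zero.1 <|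
    ge_of_tendsto' hmoment_tendsto fun n => measure_one_le_norm_le_lintegral_enorm_pow μ (2 * n)
  exact measure_mono_null (fun z hz => (mem_sphere_zero_iff_norm.1 hz).ge) hout
end
end
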